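/- Let p be an odd prime and s ≥ 1 an integer, and let K_s = C_{p^s} ⋉ ℤ_p^{d_s} be the pro-p-group of finite coclass with central exponent s, where d_s = p^{s-1}(p-1). Then the commutator subgroup [K_s, K_s] is isomorphic to ℤ_p^{d_s} (in particular K_s is metabelian). -/

import Mathlib

/-!
For `N ⋊ G` with `N` and `G` abelian and `G` generated by `g`, every commutator lies in the image
of `n ↦ θ n / n` with `θ = φ g`, and `⁅inr g, inl n⁆ = inl (θ n / n)`; so the commutator subgroup
is that image, which is isomorphic to `N` as soon as `θ` has no nontrivial fixed point.
For `K_s`, a `θ`-fixed vector has all coordinates equal to some `c`, as `θ` shifts coordinates,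
and the last coordinate then reads `c = -(p - 1) c`, so `p c = 0` and `c = 0`.
The hypotheses only describe `θ` on the standard basis; to pass to all of `ℤ_p^{d_s}`, an additive
map is `ℤ_p`-linear because it commutes with natural scalars and these approximate every
`c ∈ ℤ_p` to arbitrary `p`-adic precision.
-/

namespace PadicInt

variable {p : ℕ} [Fact p.Prime]

theorem eq_zero_of_forall_pow_dvd {y : ℤ_[p]} (h : ∀ n : ℕ, (p : ℤ_[p]) ^ n ∣ y) : y = 0 := by
  by_contra hy
  have hmem := Ideal.mem_span_singleton.2 (h (y.valuation + 1))
  have := (norm_le_pow_iff_le_valuation y hy _).1 ((norm_le_pow_iff_mem_span_pow y _).2 hmem)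
  omega

end PadicInt

namespace AddMonoidHom

variable {p : ℕ} [Fact p.Prime] {M : Type*} [AddCommGroup M] [Module ℤ_[p] M]

theorem map_padicInt_smul (f : M →+ ℤ_[p]) (c : ℤ_[p]) (x : M) : f (c • x) = c * f x := by
  rw [← sub_eq_zero]
  refine PadicInt.eq_zero_of_forall_pow_dvd fun k => ?_
  obtain ⟨z, hz⟩ := Ideal.mem_span_singleton'.1 (PadicInt.appr_spec k c)
  have hc : c = (c.appr k : ℕ) + ((p ^ k : ℕ) : ℤ_[p]) * z := by
    push_cast; rw [mul_comm, hz]; ring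
  refine ⟨f (z • x) - z * f x, ?_⟩
  rw [hc, add_smul, mul_smul, Nat.cast_smul_eq_nsmul, Nat.cast_smul_eq_nsmul,
    map_add, map_nsmul, map_nsmul, nsmul_eq_mul, nsmul_eq_mul]
  push_cast
  ring

theorem map_padicInt_smul_pi {ι : Type*} (f : M →+ (ι → ℤ_[p])) (c : ℤ_[p]) (x : M) :
    f (c • x) = c • f x :=
  funext fun i => ((Pi.evalAddMonoidHom _ i).comp f).map_padicInt_smul c x

def toPadicIntLinearMap {ι : Type*} (f : M →+ (ι → ℤ_[p])) : M →ₗ[ℤ_[p]] (ι → ℤ_[p]) :=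
  { f with map_smul' := f.map_padicInt_smul_pi }

end AddMonoidHom

open scoped commutatorElement

namespace SemidirectProduct

variable {N G : Type*} [CommGroup N] [CommGroup G] (φ : G →* MulAut N)

theorem commutatorElement_eq (g h : N ⋊[φ] G) :
    ⁅g, h⁆ = inl ((φ g.right h.left / h.left) / (φ h.right g.left / g.left)) := by
  obtain ⟨n, t⟩ := g
  obtain ⟨m, u⟩ := h
  ext
  · simp only [commutatorElement_def, mul_left, mul_right, inv_left, inv_right, left_inl]
    simp only [← MulAut.mul_apply, ← map_mul]
    rw [show t * u * t⁻¹ = u by rw [mul_comm t u]; group,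
      show u * u⁻¹ = (1 : G) by group]
    simp only [map_one, MulAut.one_apply, map_inv, div_eq_mul_inv, mul_inv, inv_inv]
    simp [mul_comm, mul_left_comm, mul_assoc]
  · simp only [commutatorElement_def, mul_right, inv_right, right_inl]
    rw [mul_comm t u]; group

theorem range_div_id_le {g : G} (hg : Subgroup.zpowers g = ⊤) (t : G) :
    ((φ t).toMonoidHom / MonoidHom.id N).range ≤ ((φ g).toMonoidHom / MonoidHom.id N).range := by
  have ht : t ∈ Subgroup.closure {g} := by rw [← Subgroup.zpowers_eq_closure, hg]; trivial
  induction ht using Subgroup.closure_induction with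
  | mem t ht => rw [Set.mem_singleton_iff.1 ht]
  | one => rintro _ ⟨n, rfl⟩; simp
  | mul t u _ _ iht ihu =>
    rintro _ ⟨n, rfl⟩
    have : φ (t * u) n / n = (φ t (φ u n) / φ u n) * (φ u n / n) := by
      rw [map_mul, MulAut.mul_apply, div_mul_div_cancel]
    simpa [this] using mul_mem (iht ⟨φ u n, rfl⟩) (ihu ⟨n, rfl⟩)
  | inv t _ iht =>
    rintro _ ⟨n, rfl⟩
    have : φ t⁻¹ n / n = (φ t (φ t⁻¹ n) / φ t⁻¹ n)⁻¹ := by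
      rw [← MulAut.mul_apply, ← map_mul, mul_inv_cancel, map_one, MulAut.one_apply, inv_div]
    simpa [this] using inv_mem (iht ⟨φ t⁻¹ n, rfl⟩)

theorem commutator_eq_map_range {g : G} (hg : Subgroup.zpowers g = ⊤) :
    commutator (N ⋊[φ] G) = ((φ g).toMonoidHom / MonoidHom.id N).range.map inl := by
  apply le_antisymm
  · rw [commutator_def, Subgroup.commutator_le]
    intro x _ y _
    rw [commutatorElement_eq]
    exact ⟨_, div_mem (range_div_id_le φ hg _ ⟨y.left, rfl⟩)
      (range_div_id_le φ hg _ ⟨x.left, rfl⟩), rfl⟩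
  · rintro _ ⟨_, ⟨n, rfl⟩, rfl⟩
    have : (inl (((φ g).toMonoidHom / MonoidHom.id N) n) : N ⋊[φ] G) =
        ⁅(inr g : N ⋊[φ] G), inl n⁆ := by
      simp [commutatorElement_def, inl_aut, div_eq_mul_inv]
    rw [this, commutator_def]
    exact Subgroup.commutator_mem_commutator (Subgroup.mem_top _) (Subgroup.mem_top _)

noncomputable def commutatorEquiv {g : G} (hg : Subgroup.zpowers g = ⊤)
    (hfix : ∀ n : N, φ g n = n → n = 1) : commutator (N ⋊[φ] G) ≃* N :=
  have hinj : Function.Injective ((φ g).toMonoidHom / MonoidHom.id N) := by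
    rw [injective_iff_map_eq_one]
    intro n hn
    exact hfix n (div_eq_one.1 hn)
  ((MulEquiv.subgroupCongr (commutator_eq_map_range φ hg)).trans
    (Subgroup.equivMapOfInjective _ inl inl_injective).symm).trans
    (MonoidHom.ofInjective hinj).symm

end SemidirectProduct

theorem LinearMap.apply_eq_sum_mul_apply_single {R : Type*} [Ring R] {n : ℕ}
    (f : (Fin n → R) →ₗ[R] Fin n → R) (a : Fin n → R) (j : Fin n) :
    f a j = ∑ i, a i * f (Pi.single i 1) j := by
  have hsingle (i : Fin n) : (fun j => if i = j then 1 else 0) = (Pi.single i 1 : Fin n → R) := by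
    ext j; simp [Pi.single_apply, eq_comm]
  simp only [LinearMap.pi_apply_eq_sum_univ f a, hsingle, Finset.sum_apply, Pi.smul_apply,
    smul_eq_mul]

section FeedbackShift

variable {R : Type*} [Ring R] {n q : ℕ}

/-- `f` has the matrix of the paper's `θ`, in 0-indexed coordinates (`v_{i+1}` is `Pi.single i 1`, and
`ε_{i+1} = 1` iff `q ∣ i`): `θ` shifts coordinates down by one and feeds `-∑_{q ∣ i} a_i` back
into the last coordinate. -/
def IsFeedbackShift (q : ℕ) (f : (Fin n → R) → Fin n → R) : Prop :=
  ∀ i j : Fin n, f (Pi.single i 1) j =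
    (if (i : ℕ) = j + 1 then 1 else 0) - if (j : ℕ) = n - 1 ∧ q ∣ (i : ℕ) then 1 else 0

theorem IsFeedbackShift.of_single {f : (Fin n → R) → Fin n → R}
    (h₀ : ∀ z l : Fin n, (z : ℕ) = 0 → (l : ℕ) = n - 1 → f (Pi.single z 1) = -Pi.single l 1)
    (h₁ : ∀ j k l : Fin n, (k : ℕ) = (j : ℕ) + 1 → (l : ℕ) = n - 1 →
      f (Pi.single k 1) = if q ∣ (k : ℕ) then Pi.single j 1 - Pi.single l 1 else Pi.single j 1) :
    IsFeedbackShift q f := by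
  intro i j
  have hn : 0 < n := j.pos
  let l : Fin n := ⟨n - 1, by omega⟩
  have hl : j = l ↔ (j : ℕ) = n - 1 := Fin.ext_iff
  rcases Nat.eq_zero_or_eq_succ_pred (i : ℕ) with hi | hi
  · rw [h₀ i l hi rfl]
    by_cases hj : (j : ℕ) = n - 1 <;> simp [Pi.single_apply, hl, hj, hi]
  · let i' : Fin n := ⟨(i : ℕ).pred, by omega⟩
    rw [h₁ i' i l hi rfl]
    have hi' : j = i' ↔ (i : ℕ) = j + 1 := by rw [Fin.ext_iff]; simp only [i']; omega
    by_cases hq : q ∣ (i : ℕ) <;> by_cases hj : (j : ℕ) = n - 1 <;>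
      simp [Pi.single_apply, hi', hl, hq, hj]

namespace IsFeedbackShift

variable {f : (Fin n → R) →ₗ[R] Fin n → R}

theorem apply_eq_of_succ (hf : IsFeedbackShift q f) (a : Fin n → R) {j k : Fin n} (hk : (k : ℕ) = j + 1) :
    f a j = a k := by
  have hj : (j : ℕ) ≠ n - 1 := by omega
  rw [f.apply_eq_sum_mul_apply_single, Finset.sum_eq_single k]
  · simp [hf _ _, hk, hj]
  · intro i _ hik
    have : (i : ℕ) ≠ j + 1 := fun h => hik (Fin.ext (h.trans hk.symm))
    simp [hf _ _, hj, this]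
  · simp

theorem apply_last (hf : IsFeedbackShift q f) (a : Fin n → R) {l : Fin n} (hl : (l : ℕ) = n - 1) :
    f a l = -∑ i ∈ Finset.univ.filter fun i : Fin n => q ∣ (i : ℕ), a i := by
  have hi (i : Fin n) : (i : ℕ) ≠ n - 1 + 1 := by omega
  rw [f.apply_eq_sum_mul_apply_single, Finset.sum_filter, ← Finset.sum_neg_distrib]
  refine Finset.sum_congr rfl fun i _ => ?_
  simp only [hf _ _, hl, hi, if_false, true_and]
  split_ifs <;> simp

theorem eq_zero_of_apply_eq_self [IsAddTorsionFree R] (hf : IsFeedbackShift q f)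
    {a : Fin n → R} (ha : f a = a) : a = 0 := by
  rcases Nat.eq_zero_or_pos n with rfl | hn
  · exact Subsingleton.elim _ _
  have hconst (i : Fin n) : a i = a ⟨0, hn⟩ := by
    obtain ⟨m, hm⟩ := i
    induction m with
    | zero => rfl
    | succ m ih => rw [← ih (by omega), ← hf.apply_eq_of_succ a (j := ⟨m, by omega⟩) rfl, ha]
  set c := a ⟨0, hn⟩
  have hc : ((Finset.univ.filter fun i : Fin n => q ∣ (i : ℕ)).card + 1) • c = 0 := by
    have hlast := hf.apply_last a (l := ⟨n - 1, by omega⟩) rfl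
    rw [ha, hconst, Finset.sum_congr rfl fun i _ => hconst i, Finset.sum_const] at hlast
    rw [succ_nsmul, ← eq_neg_iff_add_eq_zero, ← neg_eq_iff_eq_neg, ← hlast]
  have hc0 : c = 0 := (smul_eq_zero.1 hc).resolve_left (Nat.succ_ne_zero _)
  funext i
  rw [Pi.zero_apply, ← hc0, hconst i]

end IsFeedbackShift

end FeedbackShift

theorem ZMod.zpowers_ofAdd_one (m : ℕ) :
    Subgroup.zpowers (Multiplicative.ofAdd (1 : ZMod m)) = ⊤ := by
  refine Subgroup.eq_top_iff' _ |>.2 fun t => ⟨(Multiplicative.toAdd t).cast, ?_⟩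
  change Multiplicative.ofAdd 1 ^ _ = t
  rw [← ofAdd_zsmul, zsmul_one, ZMod.intCast_zmod_cast, ofAdd_toAdd]

open Multiplicative in
theorem commutator_K_s_general (p : ℕ) [Fact p.Prime] (s : ℕ)
    (φ : Multiplicative (ZMod (p ^ s)) →*
      MulAut (Multiplicative (Fin (p ^ (s - 1) * (p - 1)) → ℤ_[p])))
    (hφ₁ : ∀ z l : Fin (p ^ (s - 1) * (p - 1)), (z : ℕ) = 0 →
      (l : ℕ) = p ^ (s - 1) * (p - 1) - 1 →
      φ (ofAdd 1) (ofAdd (Pi.single z 1)) = (ofAdd (Pi.single l 1))⁻¹)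
    (hφ₂ : ∀ j k l : Fin (p ^ (s - 1) * (p - 1)), (k : ℕ) = (j : ℕ) + 1 →
      (l : ℕ) = p ^ (s - 1) * (p - 1) - 1 →
      φ (ofAdd 1) (ofAdd (Pi.single k 1)) =
        if p ^ (s - 1) ∣ (k : ℕ) then ofAdd (Pi.single j 1) * (ofAdd (Pi.single l 1))⁻¹
        else ofAdd (Pi.single j 1)) :
    Nonempty ((commutator (Multiplicative (Fin (p ^ (s - 1) * (p - 1)) → ℤ_[p]) ⋊[φ] Multiplicative (ZMod (p ^ s)))) ≃*
      Multiplicative (Fin (p ^ (s - 1) * (p - 1)) → ℤ_[p])) ∧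
    (∀ x y : commutator (Multiplicative (Fin (p ^ (s - 1) * (p - 1)) → ℤ_[p]) ⋊[φ] Multiplicative (ZMod (p ^ s))), x * y = y * x) := by
  let θ := (AddEquiv.toMultiplicative.symm (φ (ofAdd 1))).toAddMonoidHom.toPadicIntLinearMap
  have hθ (x) : θ x = toAdd (φ (ofAdd 1) (ofAdd x)) := rfl
  have hθ_shift : IsFeedbackShift (p ^ (s - 1)) θ := .of_single
    (fun z l hz hl => by rw [hθ, hφ₁ z l hz hl]; rfl)
    (fun j k l hk hl => by rw [hθ, hφ₂ j k l hk hl]; split_ifs <;> simp [sub_eq_add_neg])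
  have hfix (v) (hv : φ (ofAdd 1) v = v) : v = 1 :=
    toAdd.injective (hθ_shift.eq_zero_of_apply_eq_self (by rw [hθ, ofAdd_toAdd, hv]))
  let e := SemidirectProduct.commutatorEquiv φ (ZMod.zpowers_ofAdd_one _) hfix
  exact ⟨⟨e⟩, fun x y => e.injective (by rw [map_mul, map_mul]; exact mul_comm _ _)⟩

open Multiplicative in
theorem commutator_K_s (p : ℕ) [Fact p.Prime] (hodd : Odd p) (s : ℕ) (hs : 1 ≤ s)
    (φ : Multiplicative (ZMod (p ^ s)) →*
      MulAut (Multiplicative (Fin (p ^ (s - 1) * (p - 1)) → ℤ_[p])))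
    (hφ₁ : ∀ z l : Fin (p ^ (s - 1) * (p - 1)), (z : ℕ) = 0 →
      (l : ℕ) = p ^ (s - 1) * (p - 1) - 1 →
      φ (ofAdd 1) (ofAdd (Pi.single z 1)) = (ofAdd (Pi.single l 1))⁻¹)
    (hφ₂ : ∀ j k l : Fin (p ^ (s - 1) * (p - 1)), (k : ℕ) = (j : ℕ) + 1 →
      (l : ℕ) = p ^ (s - 1) * (p - 1) - 1 →
      φ (ofAdd 1) (ofAdd (Pi.single k 1)) =
        if p ^ (s - 1) ∣ (k : ℕ) then ofAdd (Pi.single j 1) * (ofAdd (Pi.single l 1))⁻¹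
        else ofAdd (Pi.single j 1)) :
    Nonempty ((commutator (Multiplicative (Fin (p ^ (s - 1) * (p - 1)) → ℤ_[p]) ⋊[φ] Multiplicative (ZMod (p ^ s)))) ≃*
      Multiplicative (Fin (p ^ (s - 1) * (p - 1)) → ℤ_[p])) ∧
    (∀ x y : commutator (Multiplicative (Fin (p ^ (s - 1) * (p - 1)) → ℤ_[p]) ⋊[φ] Multiplicative (ZMod (p ^ s))), x * y = y * x) :=
  commutator_K_s_general p s φ hφ₁ hφ₂
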